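/- A Choi matrix $J$ on $\mathbb{C}^m\otimes\mathbb{C}^n$ corresponds to a detection-incoherent channel if and only if $J\geq 0$, $\mathrm{tr}_B(J)=\mathbb{1}_A$ (trace over the first/output factor), and $(\Delta_B\otimes\mathbb{1}_A)J = \Delta_{BA}J$, where $\Delta_{BA}=\Delta_B\otimes\Delta_A$. -/

import Mathlib

open Matrix
open scoped ComplexOrder

noncomputable def deph {ι : Type} [Fintype ι] [DecidableEq ι] :
    Matrix ι ι ℂ →ₗ[ℂ] Matrix ι ι ℂ where
  toFun ρ := Matrix.diagonal fun i => ρ i i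
  map_add' ρ σ := by
    ext i j
    by_cases h : i = j <;> simp [Matrix.diagonal_apply, h]
  map_smul' c ρ := by
    ext i j
    by_cases h : i = j <;> simp [Matrix.diagonal_apply, h]

def IsKrausChannel {ι κ : Type} [Fintype ι] [DecidableEq ι] [Fintype κ] [DecidableEq κ]
    (Φ : Matrix ι ι ℂ →ₗ[ℂ] Matrix κ κ ℂ) : Prop :=
  ∃ (N : ℕ) (K : Fin N → Matrix κ ι ℂ),
    (∀ ρ, Φ ρ = ∑ n, K n * ρ * (K n)ᴴ) ∧ (∑ n, (K n)ᴴ * K n = 1)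

/-- Detection-incoherent: `Δ ∘ Φ = Δ ∘ Φ ∘ Δ`. -/
def IsDI {ι κ : Type} [Fintype ι] [DecidableEq ι] [Fintype κ] [DecidableEq κ]
    (Φ : Matrix ι ι ℂ →ₗ[ℂ] Matrix κ κ ℂ) : Prop :=
  LinearMap.comp deph Φ = LinearMap.comp deph (LinearMap.comp Φ deph)

/-!
The Choi map `Θ ↦ J(Θ)` is a linear bijection, inverted by
`ρ ↦ (∑ i j, ρ i j * J (k, i) (l, j))_{k l}`. A positive semidefinite `J` is a sum of rank-one
terms `v vᴴ`; reading each `v : κ × ι → ℂ` as a matrix `K : κ → ι → ℂ` turns this into a Kraus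
decomposition `ρ ↦ ∑ K ρ Kᴴ` of the map with Choi matrix `J`, and conversely. For such `J` the
partial trace over the output is `(∑ Kᴴ K)ᵀ`, so trace preservation is `tr_B J = 1`.
Detection incoherence only asks that `Δ ∘ Θ` kill the off-diagonal units `|i⟩⟨j|`, i.e. that
`Θ(|i⟩⟨j|) k k = J (k, i) (k, j)` vanish for `i ≠ j`, which is `(Δ_B ⊗ 1) J = Δ_{BA} J`.
-/

open Function

section Choi

variable {ι κ : Type} [Fintype ι]

noncomputable def choiMatrix [DecidableEq ι] (Θ : Matrix ι ι ℂ →ₗ[ℂ] Matrix κ κ ℂ) :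
    Matrix (κ × ι) (κ × ι) ℂ :=
  ∑ i : ι, ∑ j : ι, kroneckerMap (· * ·) (Θ (single i j 1)) (single i j (1 : ℂ))

noncomputable def ofChoiMatrix (J : Matrix (κ × ι) (κ × ι) ℂ) :
    Matrix ι ι ℂ →ₗ[ℂ] Matrix κ κ ℂ where
  toFun ρ := of fun k l => ∑ i, ∑ j, ρ i j * J (k, i) (l, j)
  map_add' ρ σ := by
    ext k l
    simp [add_mul, Finset.sum_add_distrib]
  map_smul' c ρ := by
    ext k l
    simp [Finset.mul_sum, mul_assoc]

theorem choiMatrix_apply [DecidableEq ι] (Θ : Matrix ι ι ℂ →ₗ[ℂ] Matrix κ κ ℂ) (k l : κ)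
    (i j : ι) : choiMatrix Θ (k, i) (l, j) = Θ (single i j 1) k l := by
  simp [choiMatrix, Matrix.sum_apply, single_apply, ite_and]

theorem ofChoiMatrix_apply (J : Matrix (κ × ι) (κ × ι) ℂ) (ρ : Matrix ι ι ℂ) (k l : κ) :
    ofChoiMatrix J ρ k l = ∑ i, ∑ j, ρ i j * J (k, i) (l, j) :=
  rfl

theorem ofChoiMatrix_single [DecidableEq ι] (J : Matrix (κ × ι) (κ × ι) ℂ) (i j : ι) (k l : κ) :
    ofChoiMatrix J (single i j 1) k l = J (k, i) (l, j) := by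
  simp [ofChoiMatrix_apply, single_apply, ite_and]

theorem choiMatrix_ofChoiMatrix [DecidableEq ι] (J : Matrix (κ × ι) (κ × ι) ℂ) :
    choiMatrix (ofChoiMatrix J) = J := by
  ext ⟨k, i⟩ ⟨l, j⟩
  rw [choiMatrix_apply, ofChoiMatrix_single]

theorem ofChoiMatrix_choiMatrix [DecidableEq ι] (Θ : Matrix ι ι ℂ →ₗ[ℂ] Matrix κ κ ℂ) :
    ofChoiMatrix (choiMatrix Θ) = Θ := by
  refine ext_linearMap ℂ fun i j => LinearMap.ext_ring ?_
  ext k l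
  simp [ofChoiMatrix_single, choiMatrix_apply]

end Choi

section Kraus

variable {ι κ τ : Type} [Fintype τ]

def partialTraceFst {R : Type*} [AddCommMonoid R] [Fintype κ] (J : Matrix (κ × ι) (κ × ι) R) :
    Matrix ι ι R :=
  of fun a b => ∑ k, J (k, a) (k, b)

theorem ofChoiMatrix_sum_vecMulVec [Fintype ι] (K : τ → Matrix κ ι ℂ) (ρ : Matrix ι ι ℂ) :
    ofChoiMatrix (∑ t, vecMulVec (uncurry (K t)) (star (uncurry (K t)))) ρ
      = ∑ t, K t * ρ * (K t)ᴴ := by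
  ext k l
  simp only [ofChoiMatrix_apply, Matrix.sum_apply, mul_apply, vecMulVec_apply,
    Pi.star_apply, conjTranspose_apply, Finset.mul_sum, Finset.sum_mul]
  rw [Finset.sum_comm_cycle]
  refine Finset.sum_congr rfl fun t _ => ?_
  rw [Finset.sum_comm]
  exact Finset.sum_congr rfl fun j _ => Finset.sum_congr rfl fun i _ => by dsimp [uncurry]; ring

theorem partialTraceFst_sum_vecMulVec [Fintype κ] (K : τ → Matrix κ ι ℂ) :
    partialTraceFst (∑ t, vecMulVec (uncurry (K t)) (star (uncurry (K t))))
      = (∑ t, (K t)ᴴ * K t)ᵀ := by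
  ext a b
  simp only [partialTraceFst, of_apply, transpose_apply, Matrix.sum_apply, mul_apply,
    vecMulVec_apply, Pi.star_apply, conjTranspose_apply]
  rw [Finset.sum_comm]
  exact Finset.sum_congr rfl fun t _ => Finset.sum_congr rfl fun k _ => mul_comm _ _

end Kraus

section Dephasing

variable {ι : Type} [Fintype ι] [DecidableEq ι]

theorem deph_apply (ρ : Matrix ι ι ℂ) (i j : ι) :
    deph ρ i j = if i = j then ρ i i else 0 :=
  diagonal_apply _ _ _

theorem deph_single (i j : ι) (c : ℂ) :
    deph (single i j c) = if i = j then single i j c else 0 := by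
  ext k l
  simp only [deph_apply, single_apply]
  split_ifs <;> grind [Matrix.zero_apply]

def dephaseFst {κ R : Type*} [DecidableEq κ] [Zero R] (J : Matrix (κ × ι) (κ × ι) R) :
    Matrix (κ × ι) (κ × ι) R :=
  of fun p q => if p.1 = q.1 then J p q else 0

theorem dephaseFst_eq_deph_iff {κ : Type} [Fintype κ] [DecidableEq κ]
    (J : Matrix (κ × ι) (κ × ι) ℂ) :
    dephaseFst J = deph J ↔ ∀ k i j, i ≠ j → J (k, i) (k, j) = 0 := by
  constructor
  · intro h k i j hij
    simpa [dephaseFst, deph_apply, hij] using congr_fun₂ h (k, i) (k, j)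
  · intro h
    ext ⟨k, i⟩ ⟨l, j⟩
    simp only [dephaseFst, of_apply, deph_apply, Prod.mk.injEq]
    split_ifs <;> grind

end Dephasing

section Characterization

variable {ι κ : Type} [Fintype ι] [DecidableEq ι] [Fintype κ] [DecidableEq κ]

theorem isKrausChannel_ofChoiMatrix_iff (J : Matrix (κ × ι) (κ × ι) ℂ) :
    IsKrausChannel (ofChoiMatrix J) ↔ J.PosSemidef ∧ partialTraceFst J = 1 := by
  constructor
  · rintro ⟨N, K, hK, hTP⟩
    obtain rfl : J = ∑ t, vecMulVec (uncurry (K t)) (star (uncurry (K t))) :=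
      LeftInverse.injective choiMatrix_ofChoiMatrix <|
        LinearMap.ext fun ρ => (hK ρ).trans (ofChoiMatrix_sum_vecMulVec K ρ).symm
    exact ⟨posSemidef_iff_eq_sum_vecMulVec.2 ⟨N, _, rfl⟩,
      by rw [partialTraceFst_sum_vecMulVec, hTP, transpose_one]⟩
  · rintro ⟨hP, hT⟩
    obtain ⟨N, v, rfl⟩ := posSemidef_iff_eq_sum_vecMulVec.1 hP
    let K : Fin N → Matrix κ ι ℂ := fun t => of (curry (v t))
    refine ⟨N, K, ofChoiMatrix_sum_vecMulVec K, ?_⟩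
    rw [← transpose_transpose (∑ t, _), ← partialTraceFst_sum_vecMulVec K]
    exact (congrArg transpose hT).trans transpose_one

theorem isKrausChannel_iff_choiMatrix (Θ : Matrix ι ι ℂ →ₗ[ℂ] Matrix κ κ ℂ) :
    IsKrausChannel Θ ↔ (choiMatrix Θ).PosSemidef ∧ partialTraceFst (choiMatrix Θ) = 1 := by
  rw [← isKrausChannel_ofChoiMatrix_iff, ofChoiMatrix_choiMatrix]

theorem isDI_iff_forall_single (Θ : Matrix ι ι ℂ →ₗ[ℂ] Matrix κ κ ℂ) :
    IsDI Θ ↔ ∀ i j, i ≠ j → ∀ k, Θ (single i j 1) k k = 0 := by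
  constructor
  · intro h i j hij k
    simpa [deph_apply, deph_single, hij] using
      congr_fun₂ (LinearMap.congr_fun h (single i j 1)) k k
  · intro h
    refine ext_linearMap ℂ fun i j => LinearMap.ext_ring ?_
    simp only [LinearMap.comp_apply, singleLinearMap_apply, deph_single]
    split_ifs with hij
    · rfl
    ext k l
    simp only [deph_apply, map_zero, Matrix.zero_apply]
    split_ifs with hkl
    · exact hkl ▸ h i j hij k
    · rfl

theorem isDI_iff_choiMatrix (Θ : Matrix ι ι ℂ →ₗ[ℂ] Matrix κ κ ℂ) :
    IsDI Θ ↔ dephaseFst (choiMatrix Θ) = deph (choiMatrix Θ) := by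
  simp only [isDI_iff_forall_single, dephaseFst_eq_deph_iff, choiMatrix_apply]
  exact ⟨fun h k i j hij => h i j hij k, fun h i j hij k => h k i j hij⟩

end Characterization

theorem stmt17 {n m : ℕ} (J : Matrix (Fin m × Fin n) (Fin m × Fin n) ℂ) :
    (∃ Θ : Matrix (Fin n) (Fin n) ℂ →ₗ[ℂ] Matrix (Fin m) (Fin m) ℂ,
        IsKrausChannel Θ ∧ IsDI Θ ∧
        J = ∑ i : Fin n, ∑ j : Fin n,
          Matrix.kroneckerMap (· * ·) (Θ (Matrix.single i j 1))
            (Matrix.single i j (1 : ℂ))) ↔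
    (J.PosSemidef ∧
      (Matrix.of fun a b : Fin n => ∑ k : Fin m, J (k, a) (k, b))
        = (1 : Matrix (Fin n) (Fin n) ℂ) ∧
      (Matrix.of fun p q : Fin m × Fin n => if p.1 = q.1 then J p q else 0)
        = Matrix.diagonal fun p => J p p) := by
  constructor
  · rintro ⟨Θ, hK, hDI, rfl⟩
    obtain ⟨hP, hT⟩ := (isKrausChannel_iff_choiMatrix Θ).1 hK
    exact ⟨hP, hT, (isDI_iff_choiMatrix Θ).1 hDI⟩
  · rintro ⟨hP, hT, hD⟩
    refine ⟨ofChoiMatrix J, ?_, ?_, (choiMatrix_ofChoiMatrix J).symm⟩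
    · rw [isKrausChannel_iff_choiMatrix, choiMatrix_ofChoiMatrix]
      exact ⟨hP, hT⟩
    · rw [isDI_iff_choiMatrix, choiMatrix_ofChoiMatrix]
      exact hD
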